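/- Let a > 0, let h(z) = z on 𝔻 and q(z) = −a·Log(1−z) (principal branch of the logarithm), so that the dilatation ω = q² has unbounded image. Then the harmonic mapping f = h + conj(g) satisfies (1−|z|²)²·Φ_f(z) ≤ 4a(4a+1) for all z ∈ 𝔻; in particular, if t ∈ [0,1] and a ≤ (√(1+8t) − 1)/8, then Φ_f(z) ≤ 2t/(1−|z|²)² for all z ∈ 𝔻. -/

import Mathlib

/-!
With `h` the identity, `Sf` involves only `q'`, `q''` and the factors `2|q|/(1+|q|²) ≤ 1` and
`1/(1+|q|²) ≤ 1`, so `Φ_f ≤ |q''| + 4|q'|²`. For `q = -a Log(1-z)` the right-hand side is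
`(a + 4a²)/|1-z|²`, and `1 - |z|² ≤ 2|1-z|` on the disk. The second claim follows from the first
because `a ≤ (√(1+8t) - 1)/8` means `(8a + 1)² ≤ 1 + 8t`.
-/

open Complex Metric ComplexConjugate

noncomputable def schwarzian (F : ℂ → ℂ) (z : ℂ) : ℂ :=
  deriv (fun w => deriv (deriv F) w / deriv F w) z
    - (1 / 2) * (deriv (deriv F) z / deriv F z) ^ 2

noncomputable def Sharm (h q : ℂ → ℂ) (z : ℂ) : ℂ :=
  schwarzian h z
    + (2 * conj (q z) / (1 + ((‖q z‖ : ℂ)) ^ 2)) *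
        (deriv (deriv q) z - deriv q z * (deriv (deriv h) z / deriv h z))
    - 4 * (deriv q z * conj (q z) / (1 + ((‖q z‖ : ℂ)) ^ 2)) ^ 2

noncomputable def PhiHarm (h q : ℂ → ℂ) (z : ℂ) : ℝ :=
  ‖Sharm h q z‖
    + 4 * (‖deriv q z‖) ^ 2 / (1 + (‖q z‖) ^ 2) ^ 2

section IdentityAnalyticPart

variable (q : ℂ → ℂ) (z : ℂ)

theorem schwarzian_id : schwarzian (fun w : ℂ => w) z = 0 := by
  simp [schwarzian, deriv_id'']

theorem Sharm_id :
    Sharm (fun w : ℂ => w) q z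
      = 2 * conj (q z) / ((1 + ‖q z‖ ^ 2 : ℝ) : ℂ) * deriv (deriv q) z
        - 4 * (deriv q z * conj (q z) / ((1 + ‖q z‖ ^ 2 : ℝ) : ℂ)) ^ 2 := by
  simp [Sharm, schwarzian_id, deriv_id'']

theorem PhiHarm_id_le :
    PhiHarm (fun w : ℂ => w) q z ≤ ‖deriv (deriv q) z‖ + 4 * ‖deriv q z‖ ^ 2 := by
  have hD : 0 < 1 + ‖q z‖ ^ 2 := by positivity
  have hS : ‖Sharm (fun w : ℂ => w) q z‖
      ≤ 2 * ‖q z‖ / (1 + ‖q z‖ ^ 2) * ‖deriv (deriv q) z‖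
        + 4 * ‖deriv q z‖ ^ 2 * ‖q z‖ ^ 2 / (1 + ‖q z‖ ^ 2) ^ 2 := by
    rw [Sharm_id]
    refine (norm_sub_le _ _).trans_eq ?_
    simp only [norm_mul, norm_div, norm_pow, Complex.norm_conj, Complex.norm_real,
      Real.norm_eq_abs, abs_of_pos hD, Complex.norm_ofNat]
    field_simp
  have hm : 2 * ‖q z‖ / (1 + ‖q z‖ ^ 2) ≤ 1 := by
    rw [div_le_one hD]
    nlinarith [sq_nonneg (‖q z‖ - 1)]
  have hsum : 4 * ‖deriv q z‖ ^ 2 * ‖q z‖ ^ 2 / (1 + ‖q z‖ ^ 2) ^ 2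
      + 4 * ‖deriv q z‖ ^ 2 / (1 + ‖q z‖ ^ 2) ^ 2 = 4 * ‖deriv q z‖ ^ 2 / (1 + ‖q z‖ ^ 2) := by
    field_simp
    ring
  have hq' : 4 * ‖deriv q z‖ ^ 2 / (1 + ‖q z‖ ^ 2) ≤ 4 * ‖deriv q z‖ ^ 2 :=
    div_le_self (by positivity) (by nlinarith [sq_nonneg ‖q z‖])
  have hq'' := mul_le_of_le_one_left (norm_nonneg (deriv (deriv q) z)) hm
  unfold PhiHarm
  linarith

end IdentityAnalyticPart

section LogPole

variable (c : ℂ) {z : ℂ}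

theorem one_sub_mem_slitPlane_of_mem_ball (hz : z ∈ ball (0 : ℂ) 1) : 1 - z ∈ slitPlane := by
  rw [sub_eq_add_neg]
  exact mem_slitPlane_of_norm_lt_one (by simpa using hz)

theorem hasDerivAt_neg_mul_log_one_sub (hz : 1 - z ∈ slitPlane) :
    HasDerivAt (fun w => -c * log (1 - w)) (c * (1 - z)⁻¹) z :=
  ((((hasDerivAt_id' z).const_sub 1).clog hz).const_mul (-c)).congr_deriv (by ring)

theorem deriv_deriv_neg_mul_log_one_sub (hz : 1 - z ∈ slitPlane) :
    deriv (deriv fun w => -c * log (1 - w)) z = c * ((1 - z) ^ 2)⁻¹ := by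
  have hderiv : deriv (fun w => -c * log (1 - w)) =ᶠ[nhds z] fun w => c * (1 - w)⁻¹ := by
    filter_upwards [(isOpen_slitPlane.preimage (continuous_sub_left 1)).mem_nhds hz] with w hw
    exact (hasDerivAt_neg_mul_log_one_sub c hw).deriv
  rw [hderiv.deriv_eq]
  have : HasDerivAt (fun w => c * (1 - w)⁻¹) (c * (- -1 / (1 - z) ^ 2)) z :=
    (((hasDerivAt_id' z).const_sub 1).inv (slitPlane_ne_zero hz)).const_mul c
  rw [this.deriv]
  ring

theorem PhiHarm_neg_mul_log_one_sub_le (hz : 1 - z ∈ slitPlane) :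
    PhiHarm (fun w : ℂ => w) (fun w => -c * log (1 - w)) z
      ≤ (‖c‖ + 4 * ‖c‖ ^ 2) / ‖1 - z‖ ^ 2 := by
  refine (PhiHarm_id_le _ z).trans_eq ?_
  have hr : ‖1 - z‖ ≠ 0 := norm_ne_zero_iff.mpr (slitPlane_ne_zero hz)
  rw [deriv_deriv_neg_mul_log_one_sub c hz, (hasDerivAt_neg_mul_log_one_sub c hz).deriv]
  simp only [norm_mul, norm_inv, norm_pow]
  field_simp

end LogPole

theorem sq_one_sub_norm_sq_le {R : Type*} [SeminormedRing R] [NormOneClass R] {z : R}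
    (hz : ‖z‖ ≤ 1) : (1 - ‖z‖ ^ 2) ^ 2 ≤ 4 * ‖1 - z‖ ^ 2 := by
  have h : 1 - ‖z‖ ≤ ‖1 - z‖ := by simpa using norm_sub_norm_le (1 : R) z
  have h₂ : 1 - ‖z‖ ^ 2 ≤ 2 * ‖1 - z‖ := by nlinarith [norm_nonneg z]
  have h₀ : 0 ≤ 1 - ‖z‖ ^ 2 := by nlinarith [norm_nonneg z]
  nlinarith

theorem four_mul_mul_four_mul_add_one_le {a t : ℝ} (ha : 0 ≤ a)
    (hat : a ≤ (Real.sqrt (1 + 8 * t) - 1) / 8) : 4 * a * (4 * a + 1) ≤ 2 * t := by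
  have h : (8 * a + 1) ^ 2 ≤ 1 + 8 * t := by
    have h₁ : 8 * a + 1 ≤ Real.sqrt (1 + 8 * t) := by linarith
    exact (Real.le_sqrt' (by linarith)).mp h₁
  nlinarith

theorem stmt_4_general (a : ℝ) (ha : 0 < a) :
    (∀ z ∈ ball (0 : ℂ) 1,
      (1 - ‖z‖ ^ 2) ^ 2 *
          PhiHarm (fun w : ℂ => w) (fun z => -(a : ℂ) * Complex.log (1 - z)) z
        ≤ 4 * a * (4 * a + 1)) ∧
    (∀ t ∈ Set.Icc (0 : ℝ) 1, a ≤ (Real.sqrt (1 + 8 * t) - 1) / 8 →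
      ∀ z ∈ ball (0 : ℂ) 1,
        PhiHarm (fun w : ℂ => w) (fun z => -(a : ℂ) * Complex.log (1 - z)) z
          ≤ 2 * t / (1 - ‖z‖ ^ 2) ^ 2) := by
  have hbound : ∀ z ∈ ball (0 : ℂ) 1,
      (1 - ‖z‖ ^ 2) ^ 2 *
          PhiHarm (fun w : ℂ => w) (fun z => -(a : ℂ) * Complex.log (1 - z)) z
        ≤ 4 * a * (4 * a + 1) := by
    intro z hz
    have hslit := one_sub_mem_slitPlane_of_mem_ball hz
    have hΦ := PhiHarm_neg_mul_log_one_sub_le (a : ℂ) hslit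
    rw [Complex.norm_real, Real.norm_eq_abs, abs_of_pos ha] at hΦ
    have hr : 0 < ‖1 - z‖ := norm_pos_iff.mpr (slitPlane_ne_zero hslit)
    calc (1 - ‖z‖ ^ 2) ^ 2 * PhiHarm (fun w : ℂ => w) (fun z => -(a : ℂ) * log (1 - z)) z
        ≤ 4 * ‖1 - z‖ ^ 2 * ((a + 4 * a ^ 2) / ‖1 - z‖ ^ 2) :=
          mul_le_mul (sq_one_sub_norm_sq_le (mem_ball_zero_iff.mp hz).le) hΦ
            (by unfold PhiHarm; positivity) (by positivity)
      _ = 4 * a * (4 * a + 1) := by field_simp; ring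
  refine ⟨hbound, fun t ht hat z hz => ?_⟩
  have hz' : 0 < 1 - ‖z‖ ^ 2 := by
    nlinarith [mem_ball_zero_iff.mp hz, norm_nonneg z]
  rw [le_div_iff₀ (by positivity), mul_comm]
  exact (hbound z hz).trans (four_mul_mul_four_mul_add_one_le ha.le hat)

theorem stmt_4 (a : ℝ) (ha : 0 < a) (g : ℂ → ℂ)
    (hga : AnalyticOnNhd ℂ g (ball 0 1)) (hg0 : g 0 = 0)
    (hg' : ∀ z ∈ ball (0 : ℂ) 1,
      deriv g z = (-(a : ℂ) * Complex.log (1 - z)) ^ 2 * deriv (fun w : ℂ => w) z) :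
    (∀ z ∈ ball (0 : ℂ) 1,
      (1 - ‖z‖ ^ 2) ^ 2 *
          PhiHarm (fun w : ℂ => w) (fun z => -(a : ℂ) * Complex.log (1 - z)) z
        ≤ 4 * a * (4 * a + 1)) ∧
    (∀ t ∈ Set.Icc (0 : ℝ) 1, a ≤ (Real.sqrt (1 + 8 * t) - 1) / 8 →
      ∀ z ∈ ball (0 : ℂ) 1,
        PhiHarm (fun w : ℂ => w) (fun z => -(a : ℂ) * Complex.log (1 - z)) z
          ≤ 2 * t / (1 - ‖z‖ ^ 2) ^ 2) :=
  stmt_4_general a ha
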